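/- Let d ≥ 3 and let 1, a, b be three distinct indices in {1,…,d}. Then the gravitational wall form w^G_{a;1b} = 2e_a + Σ_{l ≠ a,1,b} e_l decomposes as w^G_{a;1b} = w^G_{1;ab} + 2(e_a − e_1), where w^G_{1;ab} = 2e_1 + Σ_{l ≠ 1,a,b} e_l is another gravitational wall form and e_a − e_1 is a sum of symmetry wall forms when a > 1. Hence the walls w^G_{a;1b} are linear combinations with positive integer coefficients of the other gravitational wall forms and the symmetry wall forms, and are therefore subdominant. -/
import Mathlib

lemma telescope (k : ℕ) (n : ℕ) :
    ∑ i ∈ Finset.range n, ((if k = i + 1 then (1 : ℝ) else 0) - (if k = i then 1 else 0))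
      = (if k = n then 1 else 0) - (if k = 0 then 1 else 0) := by
  induction n with
  | zero => simp
  | succ n ih => rw [Finset.sum_range_succ, ih]; ring

theorem gravitational_wall_a1b_subdominant (d : ℕ) (hd : 3 ≤ d) (a b : Fin d)
    (ha : a.val ≠ 0) (hb : b.val ≠ 0) (hab : a ≠ b)
    (wGa1b wG1ab ea e1 : Fin d → ℝ)
    (h1 : ∀ l, wGa1b l
      = (if l = a then 2 else 0) + (if l ≠ a ∧ l.val ≠ 0 ∧ l ≠ b then 1 else 0))
    (h2 : ∀ l, wG1ab l
      = (if l.val = 0 then 2 else 0) + (if l.val ≠ 0 ∧ l ≠ a ∧ l ≠ b then 1 else 0))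
    (hea : ∀ l, ea l = if l = a then 1 else 0)
    (he1 : ∀ l, e1 l = if l.val = 0 then 1 else 0) :
    wGa1b = wG1ab + (2 : ℝ) • (ea - e1) ∧
    ea - e1 = ∑ i ∈ Finset.range a.val,
      (fun l : Fin d => (if l.val = i + 1 then (1 : ℝ) else 0)
        - (if l.val = i then 1 else 0)) := by
  constructor
  · funext l
    simp only [Pi.add_apply, Pi.smul_apply, Pi.sub_apply, h1, h2, hea, he1, smul_eq_mul]
    by_cases hla : l = a
    · subst hla
      simp [ha, hab]
    · by_cases hl0 : l.val = 0
      · have hlb : l ≠ b := fun h => hb (h ▸ hl0)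
        simp [hla, hl0, hlb]
      · by_cases hlb : l = b
        · subst hlb
          simp [Ne.symm hab, hb]
        · simp [hla, hl0, hlb]
  · funext l
    simp only [Pi.sub_apply, hea, he1, Finset.sum_apply]
    rw [telescope l.val a.val]
    simp [Fin.ext_iff]
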